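/- arXiv:1406.7398 — 6 statements merged into one kernel-verified Lean document; each statement's English description precedes it below -/
import Mathlib

section
/- For any clause-set F (a finite set of clauses over boolean literals), the number of prime implicates of F is at most 2^{c(F)} - 1, where c(F) is the number of clauses of F. -/
open scoped Classical

/-- Variables are natural numbers. -/
abbrev Var : Type := ℕ
/-- A literal is a variable together with a polarity (`true` = positive). -/
abbrev Lit : Type := Var × Bool
/-- A clause is a finite set of literals. -/
abbrev Clause : Type := Finset Lit
/-- A clause-set is a finite set of clauses (interpreted as a CNF). -/
abbrev ClauseSet : Type := Finset Clause

/-- A proper clause contains no complementary pair of literals. -/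
def isClause (C : Clause) : Prop := ∀ v : Var, ¬((v, true) ∈ C ∧ (v, false) ∈ C)

/-- A total assignment satisfies a clause iff it makes some literal true. -/
def clauseSat (a : Var → Bool) (C : Clause) : Prop := ∃ l ∈ C, a l.1 = l.2

/-- A total assignment satisfies a clause-set (CNF) iff it satisfies every clause. -/
def cnfSat (a : Var → Bool) (F : ClauseSet) : Prop := ∀ C ∈ F, clauseSat a C

/-- A clause `C` is an implicate of `F` iff every satisfying assignment of `F`
satisfies `C` (and `C` is a proper clause). -/
def implicate (F : ClauseSet) (C : Clause) : Prop :=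
  isClause C ∧ ∀ a : Var → Bool, cnfSat a F → clauseSat a C

/-- A prime implicate is a minimal implicate under subset inclusion. -/
def primeImplicate (F : ClauseSet) (C : Clause) : Prop :=
  implicate F C ∧ ∀ D : Clause, D ⊂ C → ¬ implicate F D

/-- The complement of a literal. -/
def compLit (l : Lit) : Lit := (l.1, !l.2)

lemma lit_eq_of_fst_eq {l m : Lit} (h : m.1 = l.1) : m = l ∨ m = compLit l := by
  rcases l with ⟨v, b⟩; rcases m with ⟨w, c⟩
  simp only at h; subst h
  rcases b with _ | _ <;> rcases c with _ | _ <;> simp [compLit]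

/-- The set of "pure" literals of a clause-set: occurring, with complement not occurring. -/
noncomputable def pureLits (G : ClauseSet) : Clause :=
  (G.biUnion id).filter (fun l => ∀ D ∈ G, compLit l ∉ D)

lemma mem_pureLits {G : ClauseSet} {l : Lit} :
    l ∈ pureLits G ↔ (∃ D ∈ G, l ∈ D) ∧ ∀ D ∈ G, compLit l ∉ D := by
  simp [pureLits]

lemma exists_falsifying (C : Clause) (h : isClause C) : ∃ a : Var → Bool, ¬ clauseSat a C := by
  refine ⟨fun v => if (v, true) ∈ C then false else true, ?_⟩
  rintro ⟨⟨v, b⟩, hm, hv⟩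
  simp only at hv
  cases b with
  | true => rw [if_pos hm] at hv; simp at hv
  | false =>
      rw [if_neg (fun hc => h v ⟨hc, hm⟩)] at hv
      simp at hv

lemma prime_eq_pure (F : ClauseSet) (C : Clause) (hC : primeImplicate F C) :
    ∃ G ∈ F.powerset.erase ∅, C = pureLits G := by
  obtain ⟨⟨hcl, himp⟩, hmin⟩ := hC
  set S : Finset ClauseSet :=
    F.powerset.filter (fun G => ∀ a, cnfSat a G → clauseSat a C) with hS
  have hFS : F ∈ S := by
    simp only [hS, Finset.mem_filter, Finset.mem_powerset]
    exact ⟨subset_rfl, himp⟩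
  obtain ⟨G, hGS, hGmin⟩ := S.exists_min_image Finset.card ⟨F, hFS⟩
  rw [hS, Finset.mem_filter, Finset.mem_powerset] at hGS
  obtain ⟨hGF, hGimp⟩ := hGS
  -- minimality: no clause of G can be erased
  have hmin' : ∀ D ∈ G, ¬ (∀ a, cnfSat a (G.erase D) → clauseSat a C) := by
    intro D hD h
    have hmem : G.erase D ∈ S := by
      simp only [hS, Finset.mem_filter, Finset.mem_powerset]
      exact ⟨(Finset.erase_subset _ _).trans hGF, h⟩
    have h1 := hGmin _ hmem
    have h2 := Finset.card_erase_lt_of_mem hD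
    omega
  -- fact (a): complements of literals of C do not occur in G
  have ha : ∀ l ∈ C, ∀ D ∈ G, compLit l ∉ D := by
    intro l hl D hD hcomp
    apply hmin' D hD
    intro a hA
    by_contra h1
    have hal : a l.1 = !l.2 := by
      have := fun h => h1 ⟨l, hl, h⟩
      cases hb : a l.1 <;> cases hb2 : l.2 <;> simp_all
    have hsatD : clauseSat a D := ⟨compLit l, hcomp, hal⟩
    have hsatG : cnfSat a G := by
      intro D' hD'
      by_cases hDD : D' = D
      · exact hDD ▸ hsatD
      · exact hA D' (Finset.mem_erase.mpr ⟨hDD, hD'⟩)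
    exact h1 (hGimp a hsatG)
  -- fact (b): every literal of C occurs in G
  have hb : ∀ l ∈ C, ∃ D ∈ G, l ∈ D := by
    intro l hl
    by_contra h0
    push_neg at h0
    -- then C.erase l is an implicate of F, contradicting primality
    apply hmin (C.erase l) (Finset.erase_ssubset hl)
    constructor
    · intro v hv
      exact hcl v ⟨Finset.mem_of_mem_erase hv.1, Finset.mem_of_mem_erase hv.2⟩
    · intro a haF
      have haG : cnfSat a G := fun D hD => haF D (hGF hD)
      set a' : Var → Bool := Function.update a l.1 (!l.2) with ha'
      have hvarfree : ∀ m : Lit, ∀ D ∈ G, m ∈ D → m.1 ≠ l.1 := by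
        intro m D hD hm heq
        rcases lit_eq_of_fst_eq heq with rfl | rfl
        · exact h0 D hD hm
        · exact ha l hl D hD hm
      have hG' : cnfSat a' G := by
        intro D hD
        obtain ⟨m, hm, ham⟩ := haG D hD
        exact ⟨m, hm, by rw [ha', Function.update_of_ne (hvarfree m D hD hm)]; exact ham⟩
      obtain ⟨m, hmC, ham⟩ := hGimp a' hG'
      have hml : m ≠ l := by
        rintro rfl
        rw [ha', Function.update_self] at ham
        simp at ham
      have hmv : m.1 ≠ l.1 := by
        intro heq
        rcases lit_eq_of_fst_eq heq with rfl | rfl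
        · exact hml rfl
        · rcases l with ⟨v, b⟩
          cases b
          · exact hcl v ⟨hmC, hl⟩
          · exact hcl v ⟨hl, hmC⟩
      refine ⟨m, Finset.mem_erase.mpr ⟨hml, hmC⟩, ?_⟩
      rw [ha', Function.update_of_ne hmv] at ham
      exact ham
  -- fact (c): every pure literal of G is in C
  have hc : ∀ l, (∃ D ∈ G, l ∈ D) → (∀ D ∈ G, compLit l ∉ D) → l ∈ C := by
    intro l ⟨D₀, hD₀, hlD₀⟩ hpure
    by_contra hlC
    have hcompC : compLit l ∉ C := by
      intro hcc
      obtain ⟨D, hD, hmem⟩ := hb _ hcc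
      exact hpure D hD hmem
    apply hmin' D₀ hD₀
    intro a hA
    by_contra h1
    set a' : Var → Bool := Function.update a l.1 l.2 with ha'
    have hG' : cnfSat a' G := by
      intro D hD
      by_cases hDD : D = D₀
      · exact ⟨l, hDD ▸ hlD₀, by rw [ha', Function.update_self]⟩
      · obtain ⟨m, hm, ham⟩ := hA D (Finset.mem_erase.mpr ⟨hDD, hD⟩)
        by_cases hmv : m.1 = l.1
        · rcases lit_eq_of_fst_eq hmv with rfl | rfl
          · exact ⟨m, hm, by rw [ha', Function.update_self]⟩
          · exact absurd hm (hpure D hD)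
        · exact ⟨m, hm, by rw [ha', Function.update_of_ne hmv]; exact ham⟩
    obtain ⟨m, hmC, ham⟩ := hGimp a' hG'
    have hmv : m.1 ≠ l.1 := by
      intro heq
      rcases lit_eq_of_fst_eq heq with rfl | rfl
      · exact hlC hmC
      · exact hcompC hmC
    exact h1 ⟨m, hmC, by rw [ha', Function.update_of_ne hmv] at ham; exact ham⟩
  -- G is nonempty
  have hGne : G ≠ ∅ := by
    rintro rfl
    obtain ⟨a, hna⟩ := exists_falsifying C hcl
    exact hna (hGimp a (by intro D hD; simp at hD))
  refine ⟨G, Finset.mem_erase.mpr ⟨hGne, Finset.mem_powerset.mpr hGF⟩, ?_⟩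
  ext l
  rw [mem_pureLits]
  constructor
  · intro hl
    exact ⟨hb l hl, fun D hD => ha l hl D hD⟩
  · intro ⟨h1, h2⟩
    exact hc l h1 h2

/-- the number of prime implicates of a clause-set `F` is at most
`2 ^ c(F) - 1`, where `c(F)` is the number of clauses of `F`. -/
theorem stmt0 (F : ClauseSet) (hF : ∀ C ∈ F, isClause C) :
    {C : Clause | primeImplicate F C}.Finite ∧
      {C : Clause | primeImplicate F C}.ncard ≤ 2 ^ F.card - 1 := by
  have hsub : {C : Clause | primeImplicate F C} ⊆
      pureLits '' ((F.powerset.erase ∅ : Finset ClauseSet) : Set ClauseSet) := by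
    intro C hCpi
    obtain ⟨G, hG, hCG⟩ := prime_eq_pure F C hCpi
    exact ⟨G, Finset.mem_coe.mpr hG, hCG.symm⟩
  have hfinimg : (pureLits '' ((F.powerset.erase ∅ : Finset ClauseSet) : Set ClauseSet)).Finite :=
    (F.powerset.erase ∅).finite_toSet.image pureLits
  refine ⟨hfinimg.subset hsub, ?_⟩
  calc {C : Clause | primeImplicate F C}.ncard
      ≤ (pureLits '' ((F.powerset.erase ∅ : Finset ClauseSet) : Set ClauseSet)).ncard :=
        Set.ncard_le_ncard hsub hfinimg
    _ ≤ ((F.powerset.erase ∅ : Finset ClauseSet) : Set ClauseSet).ncard := Set.ncard_image_le (F.powerset.erase ∅).finite_toSet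
    _ = (F.powerset.erase ∅).card := Set.ncard_coe_finset _
    _ = 2 ^ F.card - 1 := by
        rw [Finset.card_erase_of_mem (Finset.empty_mem_powerset F), Finset.card_powerset]
end

section
/- A literal x is not forced for a clause-set F if and only if F is satisfiable and there exists an autarky φ for F with φ(x) = 0. -/
open scoped Classical

/-- Satisfiability of a clause-set. -/
def sat (F : ClauseSet) : Prop := ∃ a : Var → Bool, cnfSat a F

/-- A literal `x` is forced for `F` iff every satisfying total assignment of `F`
makes `x` true (equivalently, assigning `x` to 0 yields an unsatisfiable clause-set). -/
def forcedLit (F : ClauseSet) (x : Lit) : Prop :=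
  ∀ a : Var → Bool, cnfSat a F → a x.1 = x.2

/-- A partial assignment (a map to `Option Bool`, `none` = unassigned) is an autarky
for `F` iff every clause of `F` touched by it contains a literal it satisfies. -/
def autarky (φ : Var → Option Bool) (F : ClauseSet) : Prop :=
  ∀ C ∈ F, (∃ l ∈ C, φ l.1 ≠ none) → ∃ l ∈ C, φ l.1 = some l.2

/-- a literal `x` is not forced for `F` iff `F` is satisfiable and
there is an autarky `φ` for `F` (with finite domain) setting the literal `x` to 0. -/
theorem stmt5 (F : ClauseSet) (hF : ∀ C ∈ F, isClause C) (x : Lit) :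
    ¬ forcedLit F x ↔
      (sat F ∧ ∃ φ : Var → Option Bool, {v | φ v ≠ none}.Finite ∧
        autarky φ F ∧ φ x.1 = some (!x.2)) := by
  constructor
  · intro h
    simp only [forcedLit, not_forall] at h
    obtain ⟨a, ha, hax⟩ := h
    have hax' : a x.1 = !x.2 := by
      cases hx : a x.1 <;> cases hx2 : x.2 <;> simp_all
    refine ⟨⟨a, ha⟩, ?_⟩
    set V : Finset Var := insert x.1 (F.biUnion (fun C => C.image Prod.fst)) with hV
    refine ⟨fun v => if v ∈ V then some (a v) else none, ?_, ?_, ?_⟩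
    · apply Set.Finite.subset V.finite_toSet
      intro v hv
      simp only [Set.mem_setOf_eq] at hv
      by_cases hm : v ∈ V
      · exact Finset.mem_coe.mpr hm
      · simp [hm] at hv
    · intro C hC _
      obtain ⟨l, hl, hal⟩ := ha C hC
      refine ⟨l, hl, ?_⟩
      have : l.1 ∈ V := by
        simp only [hV, Finset.mem_insert, Finset.mem_biUnion]
        right; exact ⟨C, hC, Finset.mem_image_of_mem _ hl⟩
      simp [this, hal]
    · have : x.1 ∈ V := Finset.mem_insert_self _ _
      simp [this, hax']
  · rintro ⟨⟨a, ha⟩, φ, _, hφ, hφx⟩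
    intro hforced
    set b : Var → Bool := fun v => (φ v).getD (a v) with hb
    have hbsat : cnfSat b F := by
      intro C hC
      by_cases htouch : ∃ l ∈ C, φ l.1 ≠ none
      · obtain ⟨l, hl, hsome⟩ := hφ C hC htouch
        exact ⟨l, hl, by simp [hb, hsome]⟩
      · push_neg at htouch
        obtain ⟨l, hl, hal⟩ := ha C hC
        exact ⟨l, hl, by simp [hb, htouch l hl, hal]⟩
    have := hforced b hbsat
    rw [hb] at this
    simp [hφx] at this
end

section
/- If φ is an autarky for a clause-set F, then F is satisfiable if and only if the clause-set φ * F (the result of applying φ to F) is satisfiable. -/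
open scoped Classical

noncomputable section

/-- Application `φ * F` of a partial assignment: clauses containing a literal set to 1
are removed, and literals set to 0 are removed from the remaining clauses. -/
def applyPA (φ : Var → Option Bool) (F : ClauseSet) : ClauseSet :=
  (F.filter (fun C => ¬ ∃ l ∈ C, φ l.1 = some l.2)).image
    (fun C => C.filter (fun l => φ l.1 ≠ some (!l.2)))

/-! An autarky satisfies every clause it touches and leaves the others unchanged, so `φ * F`
is just the set of clauses of `F` untouched by `φ`. A model of this subset is turned into a
model of `F` by overriding it with `φ`: the clauses touched by `φ` are satisfied by `φ`, and
the untouched ones keep their satisfying literal. -/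

def Untouched (φ : Var → Option Bool) (C : Clause) : Prop := ∀ l ∈ C, φ l.1 = none

def override (φ : Var → Option Bool) (a : Var → Bool) (v : Var) : Bool := (φ v).getD (a v)

lemma sat_of_subset {F G : ClauseSet} (hGF : G ⊆ F) : sat F → sat G :=
  fun ⟨a, ha⟩ => ⟨a, fun C hC => ha C (hGF hC)⟩

lemma not_exists_satisfied_iff_untouched {φ : Var → Option Bool} {F : ClauseSet}
    (haut : autarky φ F) {C : Clause} (hC : C ∈ F) :
    (¬ ∃ l ∈ C, φ l.1 = some l.2) ↔ Untouched φ C := by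
  constructor
  · intro hno l hl
    by_contra htouch
    exact hno (haut C hC ⟨l, hl, htouch⟩)
  · rintro hunt ⟨l, hl, hsat⟩
    simp [hunt l hl] at hsat

lemma applyPA_eq_filter_untouched {φ : Var → Option Bool} {F : ClauseSet}
    (haut : autarky φ F) : applyPA φ F = F.filter (Untouched φ) := by
  have hfilter : F.filter (fun C => ¬ ∃ l ∈ C, φ l.1 = some l.2) = F.filter (Untouched φ) :=
    Finset.filter_congr fun C hC => not_exists_satisfied_iff_untouched haut hC
  have hid : Set.EqOn (fun C : Clause => C.filter fun l => φ l.1 ≠ some (!l.2)) id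
      (F.filter (Untouched φ)) := fun C hC =>
    Finset.filter_true_of_mem fun l hl => by simp [(Finset.mem_filter.mp hC).2 l hl]
  rw [applyPA, hfilter, Finset.image_congr hid, Finset.image_id]

lemma cnfSat_override {φ : Var → Option Bool} {F : ClauseSet} (haut : autarky φ F)
    {a : Var → Bool} (ha : cnfSat a (F.filter (Untouched φ))) : cnfSat (override φ a) F := by
  intro C hC
  by_cases htouch : ∃ l ∈ C, φ l.1 ≠ none
  · obtain ⟨l, hl, hsat⟩ := haut C hC htouch
    exact ⟨l, hl, by simp [override, hsat]⟩
  · push Not at htouch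
    obtain ⟨l, hl, hsat⟩ := ha C (Finset.mem_filter.mpr ⟨hC, htouch⟩)
    exact ⟨l, hl, by simp [override, htouch l hl, hsat]⟩

theorem stmt6_general (F : ClauseSet)
    (φ : Var → Option Bool)
    (haut : autarky φ F) :
    sat F ↔ sat (applyPA φ F) := by
  rw [applyPA_eq_filter_untouched haut]
  exact ⟨sat_of_subset (Finset.filter_subset _ _), fun ⟨a, ha⟩ => ⟨_, cnfSat_override haut ha⟩⟩

/-- if `φ` is an autarky for `F`, then `F` is satisfiable iff `φ * F`
is satisfiable. -/
theorem stmt6 (F : ClauseSet) (hF : ∀ C ∈ F, isClause C)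
    (φ : Var → Option Bool) (hfin : {v | φ v ≠ none}.Finite)
    (haut : autarky φ F) :
    sat F ↔ sat (applyPA φ F) :=
  stmt6_general F φ haut
end
end

section
/- Consider a finite family (F_i)_{i∈I} of clause-sets such that the bipartite incidence graph between the index set I and the set of occurring variables (with an edge between i and v iff v occurs in F_i) is acyclic. If no F_i has any forced literal (each F_i is satisfiable and every literal over its variables can be extended to a satisfying assignment with that literal false), then the union ∪_{i∈I} F_i has no forced literal. -/
open scoped Classical

def clsVars (F : ClauseSet) : Finset Var := F.sup (fun C => C.image Prod.fst)

/-- The bipartite incidence graph of a family of clause-sets: vertices are the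
indices (left) and the variables (right), with an edge between `i` and `v`
iff `v` occurs in `F i`. -/
def incGraph {I : Type*} (F : I → ClauseSet) : SimpleGraph (I ⊕ Var) :=
  SimpleGraph.fromRel (fun a b =>
    ∃ i v, a = Sum.inl i ∧ b = Sum.inr v ∧ v ∈ clsVars (F i))

lemma adj_iff {I : Type*} (F : I → ClauseSet) (a b : I ⊕ Var) :
    (incGraph F).Adj a b ↔ ∃ i v, v ∈ clsVars (F i) ∧
      ((a = Sum.inl i ∧ b = Sum.inr v) ∨ (a = Sum.inr v ∧ b = Sum.inl i)) := by
  simp only [incGraph, SimpleGraph.fromRel_adj]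
  constructor
  · rintro ⟨hne, ⟨i, v, h1, h2, h3⟩ | ⟨i, v, h1, h2, h3⟩⟩
    · exact ⟨i, v, h3, Or.inl ⟨h1, h2⟩⟩
    · exact ⟨i, v, h3, Or.inr ⟨h2, h1⟩⟩
  · rintro ⟨i, v, h3, ⟨h1, h2⟩ | ⟨h1, h2⟩⟩
    · exact ⟨by simp [h1, h2], Or.inl ⟨i, v, h1, h2, h3⟩⟩
    · exact ⟨by simp [h1, h2], Or.inr ⟨i, v, h2, h1, h3⟩⟩

lemma adj_of_mem {I : Type*} {F : I → ClauseSet} {i : I} {v : Var} (h : v ∈ clsVars (F i)) :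
    (incGraph F).Adj (Sum.inl i) (Sum.inr v) :=
  (adj_iff F _ _).2 ⟨i, v, h, Or.inl ⟨rfl, rfl⟩⟩

lemma support_endpoint_or_adj {I : Type*} {F : I → ClauseSet} {a b : I ⊕ Var}
    (p : (incGraph F).Walk a b) : ∀ x ∈ p.support, x = b ∨ ∃ y, (incGraph F).Adj x y := by
  induction p with
  | nil => intro x hx; simp at hx; exact Or.inl hx
  | @cons u v w h q ih =>
    intro x hx
    rw [SimpleGraph.Walk.support_cons, List.mem_cons] at hx
    rcases hx with rfl | hx
    · exact Or.inr ⟨v, h⟩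
    · exact ih x hx

lemma exists_leaf {I : Type*} [Fintype I] (F : I → ClauseSet)
    (hac : (incGraph F).IsAcyclic) (s : Finset I) (hs : s.Nonempty) :
    ∃ i ∈ s, ∃ v : Var, ∀ w ∈ clsVars (F i),
      (∃ j ∈ s, j ≠ i ∧ w ∈ clsVars (F j)) → w = v := by
  classical
  set G := incGraph F with hG
  obtain ⟨i₀, hi₀⟩ := hs
  set Rel : Finset (I ⊕ Var) :=
    Finset.univ.image Sum.inl ∪ (Finset.univ.sup (fun i => clsVars (F i))).image Sum.inr with hRel
  set L : Set ℕ := {n | ∃ (a : I ⊕ Var) (i : I) (p : G.Walk a (Sum.inl i)), i ∈ s ∧ p.IsPath ∧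
    (∀ j, Sum.inl j ∈ p.support → j ∈ s) ∧ p.length = n} with hL
  have hsupRel : ∀ {a : I ⊕ Var} {b : I} (p : G.Walk a (Sum.inl b)), ∀ x ∈ p.support, x ∈ Rel := by
    intro a b p x hx
    rcases support_endpoint_or_adj p x hx with rfl | ⟨y, hy⟩
    · exact Finset.mem_union_left _ (Finset.mem_image_of_mem _ (Finset.mem_univ _))
    · rcases (adj_iff F _ _).1 hy with ⟨i, v, hv, ⟨rfl, -⟩ | ⟨rfl, -⟩⟩
      · exact Finset.mem_union_left _ (Finset.mem_image_of_mem _ (Finset.mem_univ _))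
      · exact Finset.mem_union_right _ (Finset.mem_image_of_mem _
          (Finset.mem_sup.2 ⟨i, Finset.mem_univ i, hv⟩))
  have hbdd : ∀ n ∈ L, n ≤ Rel.card := by
    rintro n ⟨a, i, p, hi, hp, hidx, rfl⟩
    have h1 : p.support.toFinset.card = p.length + 1 := by
      rw [List.toFinset_card_of_nodup hp.support_nodup, SimpleGraph.Walk.length_support]
    have h2 : p.support.toFinset ⊆ Rel := by
      intro x hx; exact hsupRel p x (List.mem_toFinset.1 hx)
    have := Finset.card_le_card h2
    omega
  have h0 : 0 ∈ L := by
    refine ⟨Sum.inl i₀, i₀, SimpleGraph.Walk.nil, hi₀, SimpleGraph.Walk.IsPath.nil, ?_, rfl⟩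
    intro j hj
    simp only [SimpleGraph.Walk.support_nil, List.mem_singleton, Sum.inl.injEq] at hj
    rwa [hj]
  have hbdda : BddAbove L := ⟨Rel.card, fun n hn => hbdd n hn⟩
  set n := sSup L with hn
  have hnL : n ∈ L := Nat.sSup_mem ⟨0, h0⟩ hbdda
  have hmax : ∀ m ∈ L, m ≤ n := fun m hm => le_csSup hbdda hm
  obtain ⟨a, i, p, hi, hp, hidx, hlen⟩ := hnL
  refine ⟨i, hi, ?_⟩
  have hrp : ∃ rp : G.Walk (Sum.inl i) a, rp.IsPath ∧
      (∀ j, Sum.inl j ∈ rp.support → j ∈ s) ∧ rp.length = n := by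
    refine ⟨p.reverse, hp.reverse, ?_, by rw [SimpleGraph.Walk.length_reverse, hlen]⟩
    intro j hj
    rw [SimpleGraph.Walk.support_reverse, List.mem_reverse] at hj
    exact hidx j hj
  clear hidx hlen hp
  obtain ⟨rp, hrp, hridx, hrlen⟩ := hrp
  clear p
  cases rp with
  | nil =>
    -- a = inl i, n = 0
    refine ⟨0, ?_⟩
    intro w hw ⟨j, hj, hji, hwj⟩
    exfalso
    have e_wi : G.Adj (Sum.inr w) (Sum.inl i) := (adj_of_mem hw).symm
    have e_jw : G.Adj (Sum.inl j) (Sum.inr w) := adj_of_mem hwj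
    have hmem : 2 ∈ L := by
      refine ⟨Sum.inl j, i, SimpleGraph.Walk.cons e_jw (SimpleGraph.Walk.cons e_wi .nil),
        hi, ?_, ?_, rfl⟩
      · simp [SimpleGraph.Walk.cons_isPath_iff, hji]
      · intro j' hj'
        simp at hj'
        rcases hj' with rfl | rfl <;> assumption
    have := hmax 2 hmem
    simp at hrlen
    omega
  | @cons _ c _ hadj q =>
    have hup : ∃ u : Var, c = Sum.inr u ∧ u ∈ clsVars (F i) := by
      rcases (adj_iff F _ _).1 hadj with ⟨i', u, hu, ⟨h1, h2⟩ | ⟨h1, h2⟩⟩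
      · rw [Sum.inl.injEq] at h1
        exact ⟨u, h2, h1 ▸ hu⟩
      · simp at h1
    obtain ⟨u, rfl, hui⟩ := hup
    refine ⟨u, ?_⟩
    rintro w hw ⟨j, hj, hji, hwj⟩
    have e_iw : G.Adj (Sum.inl i) (Sum.inr w) := adj_of_mem hw
    rcases Classical.em (Sum.inr w ∈ (SimpleGraph.Walk.cons hadj q).support) with hws | hws
    · -- w occurs in the path: two paths from inl i to inr w force w = u
      have hP1 : (SimpleGraph.Walk.cons e_iw .nil).IsPath := by
        simp [SimpleGraph.Walk.cons_isPath_iff]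
      have hP2 : ((SimpleGraph.Walk.cons hadj q).takeUntil _ hws).IsPath :=
        hrp.takeUntil hws
      have hPeq := SimpleGraph.isAcyclic_iff_path_unique.1 hac
        ⟨SimpleGraph.Walk.cons e_iw .nil, hP1⟩
        ⟨(SimpleGraph.Walk.cons hadj q).takeUntil _ hws, hP2⟩
      have hWeq : SimpleGraph.Walk.cons e_iw .nil
          = (SimpleGraph.Walk.cons hadj q).takeUntil _ hws :=
        congrArg Subtype.val hPeq
      have hspec := SimpleGraph.Walk.take_spec (SimpleGraph.Walk.cons hadj q) hws
      rw [← hWeq, SimpleGraph.Walk.cons_append, SimpleGraph.Walk.nil_append] at hspec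
      injection hspec with h1 h2
      exact Sum.inr.inj h2
    · exfalso
      rcases Classical.em (Sum.inl j ∈ (SimpleGraph.Walk.cons hadj q).support) with hjs | hjs
      · -- j occurs in the path: two paths from inl i to inl j, one through w
        have e_wj : G.Adj (Sum.inr w) (Sum.inl j) := (adj_of_mem hwj).symm
        have hP2 : (SimpleGraph.Walk.cons e_iw (SimpleGraph.Walk.cons e_wj .nil)).IsPath := by
          simp [SimpleGraph.Walk.cons_isPath_iff]
          exact fun h => hji h.symm
        have hP1 : ((SimpleGraph.Walk.cons hadj q).takeUntil _ hjs).IsPath :=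
          hrp.takeUntil hjs
        have hPeq := SimpleGraph.isAcyclic_iff_path_unique.1 hac
          ⟨(SimpleGraph.Walk.cons hadj q).takeUntil _ hjs, hP1⟩
          ⟨SimpleGraph.Walk.cons e_iw (SimpleGraph.Walk.cons e_wj .nil), hP2⟩
        have hWeq : (SimpleGraph.Walk.cons hadj q).takeUntil _ hjs
            = SimpleGraph.Walk.cons e_iw (SimpleGraph.Walk.cons e_wj .nil) :=
          congrArg Subtype.val hPeq
        have : Sum.inr w ∈ ((SimpleGraph.Walk.cons hadj q).takeUntil _ hjs).support := by
          rw [hWeq]; simp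
        exact hws (SimpleGraph.Walk.support_takeUntil_subset _ hjs this)
      · -- extend the path by w and j : contradicts maximality
        have e_wi : G.Adj (Sum.inr w) (Sum.inl i) := e_iw.symm
        have e_jw : G.Adj (Sum.inl j) (Sum.inr w) := adj_of_mem hwj
        set Q := SimpleGraph.Walk.cons e_jw
          (SimpleGraph.Walk.cons e_wi (SimpleGraph.Walk.cons hadj q)) with hQ
        have hQpath : Q.IsPath := by
          rw [hQ, SimpleGraph.Walk.cons_isPath_iff, SimpleGraph.Walk.cons_isPath_iff]
          refine ⟨⟨hrp, hws⟩, ?_⟩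
          intro h
          rw [SimpleGraph.Walk.support_cons, List.mem_cons] at h
          rcases h with h | h
          · simp at h
          · exact hjs h
        have hmem : (n + 2) ∈ L := by
          refine ⟨_, j, Q.reverse, hj, hQpath.reverse, ?_, ?_⟩
          · intro j' hj'
            rw [SimpleGraph.Walk.support_reverse, List.mem_reverse] at hj'
            rw [hQ] at hj'
            simp only [SimpleGraph.Walk.support_cons, List.mem_cons] at hj'
            rcases hj' with h | h | h
            · rw [Sum.inl.injEq] at h; rwa [h]
            · simp at h
            · exact hridx j' (by simpa using h)
          · rw [SimpleGraph.Walk.length_reverse, hQ]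
            simp only [SimpleGraph.Walk.length_cons] at hrlen ⊢
            omega
        have := hmax _ hmem
        omega

lemma var_mem_clsVars {G : ClauseSet} {C : Clause} {l : Lit} (hC : C ∈ G) (hl : l ∈ C) :
    l.1 ∈ clsVars G :=
  Finset.mem_sup.2 ⟨C, hC, Finset.mem_image_of_mem _ hl⟩

/-- if the incidence graph of a finite family of clause-sets is
acyclic and no member has a forced literal (i.e. for every member and every
literal there is a satisfying assignment making that literal false), then the
union of the family has no forced literal. -/
theorem stmt7 {I : Type*} [Fintype I] (F : I → ClauseSet)
    (hF : ∀ i, ∀ C ∈ F i, isClause C)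
    (hac : (incGraph F).IsAcyclic)
    (hnf : ∀ i, ∀ x : Lit, ∃ a : Var → Bool, cnfSat a (F i) ∧ a x.1 = !x.2) :
    ∀ x : Lit, ∃ a : Var → Bool, (∀ i, cnfSat a (F i)) ∧ a x.1 = !x.2 := by
  classical
  suffices H : ∀ s : Finset I, ∀ x : Lit, ∃ a : Var → Bool,
      (∀ i ∈ s, cnfSat a (F i)) ∧ a x.1 = !x.2 by
    intro x
    obtain ⟨a, ha, hx⟩ := H Finset.univ x
    exact ⟨a, fun i => ha i (Finset.mem_univ i), hx⟩
  intro s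
  induction s using Finset.strongInduction with
  | _ s ih =>
    rcases Finset.eq_empty_or_nonempty s with rfl | hs
    · intro x
      exact ⟨fun _ => !x.2, by simp, rfl⟩
    intro x
    obtain ⟨i, hi, v, hleaf⟩ := exists_leaf F hac s hs
    have hss : s.erase i ⊂ s := Finset.erase_ssubset hi
    by_cases hx : x.1 ∈ clsVars (F i)
    · obtain ⟨b, hb, hbx⟩ := hnf i x
      obtain ⟨a', ha', hav⟩ := ih _ hss (v, !(b v))
      replace hav : a' v = b v := by simpa using hav
      refine ⟨fun u => if u ∈ clsVars (F i) then b u else a' u, ?_, by simp [hx, hbx]⟩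
      intro j hj C hC
      by_cases hij : j = i
      · subst hij
        obtain ⟨l, hl, hbl⟩ := hb C hC
        exact ⟨l, hl, by simp [var_mem_clsVars hC hl, hbl]⟩
      · obtain ⟨l, hl, hal⟩ := ha' j (Finset.mem_erase.2 ⟨hij, hj⟩) C hC
        refine ⟨l, hl, ?_⟩
        by_cases hmem : l.1 ∈ clsVars (F i)
        · have hlv : l.1 = v := hleaf l.1 hmem ⟨j, hj, hij, var_mem_clsVars hC hl⟩
          simp only [if_pos hmem]
          rw [hlv, ← hav]
          rw [hlv] at hal
          exact hal
        · simp [hmem, hal]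
    · obtain ⟨a', ha', hax⟩ := ih _ hss x
      obtain ⟨b, hb, hbv⟩ := hnf i (v, !(a' v))
      replace hbv : b v = a' v := by simpa using hbv
      refine ⟨fun u => if u ∈ clsVars (F i) then b u else a' u, ?_, by simp [hx, hax]⟩
      intro j hj C hC
      by_cases hij : j = i
      · subst hij
        obtain ⟨l, hl, hbl⟩ := hb C hC
        exact ⟨l, hl, by simp [var_mem_clsVars hC hl, hbl]⟩
      · obtain ⟨l, hl, hal⟩ := ha' j (Finset.mem_erase.2 ⟨hij, hj⟩) C hC
        refine ⟨l, hl, ?_⟩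
        by_cases hmem : l.1 ∈ clsVars (F i)
        · have hlv : l.1 = v := hleaf l.1 hmem ⟨j, hj, hij, var_mem_clsVars hC hl⟩
          simp only [if_pos hmem]
          rw [hlv, hbv]
          rw [hlv] at hal
          exact hal
        · simp [hmem, hal]
end

section
/- For every clause-set F and every set V of variables, the relative hardness and relative propagation-hardness satisfy hd^V(F) ≤ phd^V(F) ≤ hd^V(F) + 1. -/
open scoped Classical

noncomputable section

/-- Assigning the single literal `x` to true (`⟨x → 1⟩ * F`): clauses containing `x`
are removed, and the complementary literal is removed from the remaining clauses. -/
def asgLit (x : Lit) (F : ClauseSet) : ClauseSet :=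
  (F.filter (fun C => x ∉ C)).image (fun C => C.erase (x.1, !x.2))

/-- The reduction `r_0`: detect the empty clause. -/
def r0 (F : ClauseSet) : ClauseSet := if (∅ : Clause) ∈ F then {(∅ : Clause)} else F

/-- Fueled version of the reductions `r_k` (generalised unit-clause propagation):
`r_0` detects the empty clause; `r_{k+1}(F) = r_{k+1}(⟨x→1⟩ * F)` whenever there
is a literal `x` of `F` with `r_k(⟨x→0⟩ * F) = {⊥}`, and otherwise `r_{k+1}(F) = F`.
The fuel (first argument) makes the recursion structural: since every assignment
removes a variable, fuel `n(F) + 1` always suffices. -/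
def rkAux : ℕ → ℕ → ClauseSet → ClauseSet
  | _, 0, F => r0 F
  | 0, _ + 1, F => r0 F
  | fuel + 1, k + 1, F =>
      if h : ∃ x : Lit, x.1 ∈ clsVars F ∧
          rkAux fuel k (asgLit (x.1, !x.2) F) = {(∅ : Clause)} then
        rkAux fuel (k + 1) (asgLit h.choose F)
      else F

/-- The reduction `r_k` (generalised unit-clause propagation at level `k`);
`r_1` is unit-clause propagation, `r_2` is failed-literal elimination. -/
def rk (k : ℕ) (F : ClauseSet) : ClauseSet := rkAux ((clsVars F).card + 1) k F

/-- `φ` is a partial assignment with variables in `V`. -/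
def PAover (V : Set Var) (φ : Var → Option Bool) : Prop :=
  {v | φ v ≠ none}.Finite ∧ ∀ v : Var, φ v ≠ none → v ∈ V

/-- `hd^V(F) ≤ k`: for every partial assignment `φ` over `V` with `φ * F`
unsatisfiable, `r_k(φ * F) = {⊥}`. -/
def hdLe (k : ℕ) (V : Set Var) (F : ClauseSet) : Prop :=
  ∀ φ : Var → Option Bool, PAover V φ →
    ¬ sat (applyPA φ F) → rk k (applyPA φ F) = {(∅ : Clause)}

/-- The relative hardness `hd^V(F)`. -/
def hdV (V : Set Var) (F : ClauseSet) : ℕ := sInf {k | hdLe k V F}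

/-- `phd^V(F) ≤ k`: for every partial assignment `φ` over `V`, if `φ * F` is
unsatisfiable then `r_k(φ * F) = {⊥}`, and if `φ * F` is satisfiable then
`r_k(φ * F)` has no forced literal whose variable is in `V`. -/
def phdLe (k : ℕ) (V : Set Var) (F : ClauseSet) : Prop :=
  ∀ φ : Var → Option Bool, PAover V φ →
    (¬ sat (applyPA φ F) → rk k (applyPA φ F) = {(∅ : Clause)}) ∧
    (sat (applyPA φ F) →
      ∀ x : Lit, x.1 ∈ V → ¬ forcedLit (rk k (applyPA φ F)) x)

/-- The relative propagation-hardness `phd^V(F)`. -/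
def phdV (V : Set Var) (F : ClauseSet) : ℕ := sInf {k | phdLe k V F}

lemma mem_clsVars {F : ClauseSet} {v : Var} :
    v ∈ clsVars F ↔ ∃ C ∈ F, ∃ b : Bool, (v, b) ∈ C := by
  simp only [clsVars, Finset.mem_sup, Finset.mem_image]
  constructor
  · rintro ⟨C, hC, ⟨u, b⟩, hl, rfl⟩; exact ⟨C, hC, b, hl⟩
  · rintro ⟨C, hC, b, hb⟩; exact ⟨C, hC, (v, b), hb, rfl⟩

lemma mem_asgLit {x : Lit} {F : ClauseSet} {D : Clause} :
    D ∈ asgLit x F ↔ ∃ C ∈ F, x ∉ C ∧ D = C.erase (x.1, !x.2) := by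
  simp only [asgLit, Finset.mem_image, Finset.mem_filter]
  constructor
  · rintro ⟨C, ⟨h1, h2⟩, rfl⟩; exact ⟨C, h1, h2, rfl⟩
  · rintro ⟨C, h1, h2, rfl⟩; exact ⟨C, ⟨h1, h2⟩, rfl⟩

lemma clsVars_asgLit_subset (x : Lit) (F : ClauseSet) :
    clsVars (asgLit x F) ⊆ clsVars F := by
  intro v hv
  rw [mem_clsVars] at hv ⊢
  obtain ⟨D, hD, b, hb⟩ := hv
  rw [mem_asgLit] at hD
  obtain ⟨C, hC, -, rfl⟩ := hD
  exact ⟨C, hC, b, Finset.mem_of_mem_erase hb⟩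

lemma var_not_mem_asgLit (x : Lit) (F : ClauseSet) :
    x.1 ∉ clsVars (asgLit x F) := by
  rw [mem_clsVars]
  rintro ⟨D, hD, b, hb⟩
  rw [mem_asgLit] at hD
  obtain ⟨C, hC, hx, rfl⟩ := hD
  have h1 : (x.1, b) ≠ (x.1, !x.2) := Finset.ne_of_mem_erase hb
  have h2 : (x.1, b) ∈ C := Finset.mem_of_mem_erase hb
  have : b = x.2 := by
    cases b <;> cases hx2 : x.2 <;> simp_all
  subst this
  exact hx (by simpa using h2)

lemma card_asgLit_lt {x : Lit} {F : ClauseSet} (h : x.1 ∈ clsVars F) :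
    (clsVars (asgLit x F)).card < (clsVars F).card :=
  Finset.card_lt_card ⟨clsVars_asgLit_subset x F,
    fun hs => var_not_mem_asgLit x F (hs h)⟩

lemma asgLit_id {x : Lit} {F : ClauseSet} (h : x.1 ∉ clsVars F) :
    asgLit x F = F := by
  apply Finset.ext
  intro D
  rw [mem_asgLit]
  constructor
  · rintro ⟨C, hC, -, rfl⟩
    have : (x.1, !x.2) ∉ C := fun hm => h (mem_clsVars.2 ⟨C, hC, _, hm⟩)
    rw [Finset.erase_eq_of_notMem this]; exact hC
  · intro hD
    refine ⟨D, hD, fun hm => h (mem_clsVars.2 ⟨D, hD, x.2, by simpa using hm⟩),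
      (Finset.erase_eq_of_notMem fun hm => h (mem_clsVars.2 ⟨D, hD, _, hm⟩)).symm⟩

lemma empty_mem_asgLit {F : ClauseSet} (h : (∅ : Clause) ∈ F) (x : Lit) :
    (∅ : Clause) ∈ asgLit x F := by
  rw [mem_asgLit]
  exact ⟨∅, h, by simp, by simp⟩

lemma asgLit_comm {x y : Lit} (hxy : x.1 ≠ y.1) (F : ClauseSet) :
    asgLit x (asgLit y F) = asgLit y (asgLit x F) := by
  have key : ∀ (x y : Lit), x.1 ≠ y.1 → ∀ D,
      D ∈ asgLit x (asgLit y F) ↔ ∃ C ∈ F, x ∉ C ∧ y ∉ C ∧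
        D = (C.erase (y.1, !y.2)).erase (x.1, !x.2) := by
    intro x y hxy D
    rw [mem_asgLit]
    constructor
    · rintro ⟨D', hD', hx, rfl⟩
      rw [mem_asgLit] at hD'
      obtain ⟨C, hC, hy, rfl⟩ := hD'
      refine ⟨C, hC, fun hm => hx (Finset.mem_erase.2 ⟨?_, hm⟩), hy, rfl⟩
      · intro he; exact hxy (by rw [he])
    · rintro ⟨C, hC, hx, hy, rfl⟩
      refine ⟨C.erase (y.1, !y.2), mem_asgLit.2 ⟨C, hC, hy, rfl⟩,
        fun hm => hx (Finset.mem_of_mem_erase hm), rfl⟩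
  apply Finset.ext
  intro D
  rw [key x y hxy, key y x hxy.symm]
  constructor
  · rintro ⟨C, hC, hx, hy, rfl⟩
    exact ⟨C, hC, hy, hx, by rw [Finset.erase_right_comm]⟩
  · rintro ⟨C, hC, hy, hx, rfl⟩
    exact ⟨C, hC, hx, hy, by rw [Finset.erase_right_comm]⟩

lemma cnfSat_asgLit {a : Var → Bool} {x : Lit} (hax : a x.1 = x.2) {F : ClauseSet}
    (h : cnfSat a F) : cnfSat a (asgLit x F) := by
  intro D hD
  rw [mem_asgLit] at hD
  obtain ⟨C, hC, hx, rfl⟩ := hD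
  obtain ⟨l, hl, hal⟩ := h C hC
  refine ⟨l, Finset.mem_erase.2 ⟨?_, hl⟩, hal⟩
  rintro rfl
  simp only at hal
  rw [hax] at hal
  simp at hal

lemma cnfSat_of_asgLit {a : Var → Bool} {x : Lit} {F : ClauseSet}
    (h : cnfSat a (asgLit x F)) :
    cnfSat (fun v => if v = x.1 then x.2 else a v) F := by
  intro C hC
  by_cases hx : x ∈ C
  · exact ⟨x, hx, by simp⟩
  · obtain ⟨l, hl, hal⟩ := h _ (mem_asgLit.2 ⟨C, hC, hx, rfl⟩)
    have hne : l ≠ (x.1, !x.2) := Finset.ne_of_mem_erase hl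
    have hlC : l ∈ C := Finset.mem_of_mem_erase hl
    refine ⟨l, hlC, ?_⟩
    by_cases hv : l.1 = x.1
    · exfalso
      have : l = (x.1, x.2) ∨ l = (x.1, !x.2) := by
        rcases l with ⟨u, b⟩
        simp only at hv; subst hv
        cases b <;> cases h2 : x.2 <;> simp_all
      rcases this with h1 | h1
      · apply hx; rw [h1] at hlC; simpa using hlC
      · exact hne h1
    · simpa [hv] using hal

lemma unsat_asgLit_neg_of_forced {F : ClauseSet} {x : Lit} (h : forcedLit F x) :
    ¬ sat (asgLit (x.1, !x.2) F) := by
  rintro ⟨a, ha⟩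
  have := cnfSat_of_asgLit ha
  have h2 := h _ this
  simp at h2

lemma forced_of_unsat_neg {F : ClauseSet} {x : Lit}
    (h : ¬ sat (asgLit (x.1, !x.2) F)) {a : Var → Bool} (ha : cnfSat a F) :
    a x.1 = x.2 := by
  by_contra hne
  have : a x.1 = !x.2 := by cases h2 : x.2 <;> simp_all
  exact h ⟨a, cnfSat_asgLit (x := (x.1, !x.2)) this ha⟩

/-- Nondeterministic k-level refutability. -/
def R : ℕ → ClauseSet → Prop
  | 0, F => (∅ : Clause) ∈ F
  | k + 1, F => (∅ : Clause) ∈ F ∨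
      ∃ x : Lit, ∃ _ : x.1 ∈ clsVars F,
        R k (asgLit (x.1, !x.2) F) ∧ R (k + 1) (asgLit x F)
  termination_by k F => (clsVars F).card + k
  decreasing_by
  · have : (clsVars (asgLit (x.1, !x.2) F)).card < (clsVars F).card :=
      card_asgLit_lt ‹x.1 ∈ clsVars F›
    omega
  · have : (clsVars (asgLit x F)).card < (clsVars F).card :=
      card_asgLit_lt ‹x.1 ∈ clsVars F›
    omega

lemma R_zero {F : ClauseSet} : R 0 F ↔ (∅ : Clause) ∈ F := by rw [R]

lemma R_succ {k : ℕ} {F : ClauseSet} : R (k + 1) F ↔ (∅ : Clause) ∈ F ∨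
    ∃ x : Lit, ∃ _ : x.1 ∈ clsVars F,
      R k (asgLit (x.1, !x.2) F) ∧ R (k + 1) (asgLit x F) := by rw [R]

lemma R_mono : ∀ (k : ℕ) (F : ClauseSet), R k F → R (k + 1) F
  | 0, F, h => R_succ.2 (Or.inl (R_zero.1 h))
  | k + 1, F, h => by
      rcases R_succ.1 h with h0 | ⟨x, hx, h1, h2⟩
      · exact R_succ.2 (Or.inl h0)
      · exact R_succ.2 (Or.inr ⟨x, hx, R_mono k _ h1, R_mono (k + 1) _ h2⟩)
  termination_by k F => (clsVars F).card + k
  decreasing_by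
  · have := card_asgLit_lt (x := (x.1, !x.2)) (F := F) hx; omega
  · have := card_asgLit_lt (F := F) hx; omega

lemma R_of_le {k k' : ℕ} (hk : k ≤ k') {F : ClauseSet} (h : R k F) : R k' F := by
  induction hk with
  | refl => exact h
  | step _ ih => exact R_mono _ _ ih

lemma R_empty {F : ClauseSet} (h : (∅ : Clause) ∈ F) (k : ℕ) : R k F := by
  cases k with
  | zero => exact R_zero.2 h
  | succ k => exact R_succ.2 (Or.inl h)

/-- R is preserved by applying any single-literal assignment. -/
lemma R_asgLit : ∀ (k : ℕ) (F : ClauseSet) (y : Lit), R k F → R k (asgLit y F)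
  | 0, F, y, h => R_zero.2 (empty_mem_asgLit (R_zero.1 h) y)
  | k + 1, F, y, h => by
      rcases R_succ.1 h with h0 | ⟨x, hx, h1, h2⟩
      · exact R_empty (empty_mem_asgLit h0 y) _
      · by_cases hvy : x.1 = y.1
        · -- y = x or y = x̄
          have : y = x ∨ y = (x.1, !x.2) := by
            rcases y with ⟨u, b⟩; rcases x with ⟨v, c⟩
            simp only at hvy; subst hvy
            cases b <;> cases hc : c <;> simp_all
          rcases this with rfl | rfl
          · exact h2
          · exact R_mono _ _ h1
        · by_cases hxy : x.1 ∈ clsVars (asgLit y F)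
          · refine R_succ.2 (Or.inr ⟨x, hxy, ?_, ?_⟩)
            · rw [asgLit_comm (by simpa using hvy)]
              exact R_asgLit k _ y h1
            · rw [asgLit_comm hvy]
              exact R_asgLit (k + 1) _ y h2
          · have key : R k (asgLit y (asgLit (x.1, !x.2) F)) :=
              R_asgLit k _ y h1
            rw [asgLit_comm (x := y) (y := (x.1, !x.2)) (by simpa using Ne.symm hvy)] at key
            rw [asgLit_id (F := asgLit y F) (by simpa using hxy)] at key
            exact R_mono _ _ key
  termination_by k F y => (clsVars F).card + k
  decreasing_by
  · have := card_asgLit_lt (x := (x.1, !x.2)) (F := F) hx; omega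
  · have := card_asgLit_lt (F := F) hx; omega
  · have := card_asgLit_lt (x := (x.1, !x.2)) (F := F) hx; omega

lemma R_unsat : ∀ (k : ℕ) (F : ClauseSet), R k F → ¬ sat F
  | 0, F, h => by
      rintro ⟨a, ha⟩
      obtain ⟨l, hl, -⟩ := ha ∅ (R_zero.1 h)
      simp at hl
  | k + 1, F, h => by
      rintro ⟨a, ha⟩
      rcases R_succ.1 h with h0 | ⟨x, hx, h1, h2⟩
      · obtain ⟨l, hl, -⟩ := ha ∅ h0
        simp at hl
      · by_cases hax : a x.1 = x.2
        · exact R_unsat (k + 1) _ h2 ⟨a, cnfSat_asgLit hax ha⟩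
        · have : a x.1 = !x.2 := by cases h2 : x.2 <;> simp_all
          exact R_unsat k _ h1 ⟨a, cnfSat_asgLit (x := (x.1, !x.2)) this ha⟩
  termination_by k F => (clsVars F).card + k
  decreasing_by
  · have := card_asgLit_lt (F := F) hx; omega
  · have := card_asgLit_lt (x := (x.1, !x.2)) (F := F) hx; omega

lemma r0_eq_singleton {F : ClauseSet} : r0 F = {(∅ : Clause)} ↔ (∅ : Clause) ∈ F := by
  unfold r0
  by_cases h : (∅ : Clause) ∈ F
  · simp [h]
  · simp only [if_neg h]
    constructor
    · intro he; rw [he] at h; simp at h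
    · intro he; exact absurd he h

lemma rkAux_zero (f : ℕ) (F : ClauseSet) : rkAux f 0 F = r0 F := by
  cases f <;> rfl

lemma rkAux_fuel_zero (k : ℕ) (F : ClauseSet) : rkAux 0 k F = r0 F := by
  cases k <;> rfl

lemma rkAux_succ (f k : ℕ) (F : ClauseSet) :
    rkAux (f + 1) (k + 1) F =
      if h : ∃ x : Lit, x.1 ∈ clsVars F ∧
          rkAux f k (asgLit (x.1, !x.2) F) = {(∅ : Clause)} then
        rkAux f (k + 1) (asgLit h.choose F)
      else F := rfl

lemma rkAux_of_empty : ∀ (f : ℕ) {F : ClauseSet}, (clsVars F).card < f →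
    (∅ : Clause) ∈ F → ∀ k, rkAux f k F = {(∅ : Clause)} := by
  intro f
  induction f with
  | zero => intro F hf; omega
  | succ f ih =>
    intro F hf hmem k
    cases k with
    | zero => rw [rkAux_zero]; exact r0_eq_singleton.2 hmem
    | succ k =>
      rw [rkAux_succ]
      by_cases hc : ∃ x : Lit, x.1 ∈ clsVars F ∧
          rkAux f k (asgLit (x.1, !x.2) F) = {(∅ : Clause)}
      · rw [dif_pos hc]
        have hspec := hc.choose_spec
        have hcard := card_asgLit_lt hspec.1
        exact ih (by omega) (empty_mem_asgLit hmem _) _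
      · rw [dif_neg hc]
        -- show F = {∅}
        have hvars : clsVars F = ∅ := by
          by_contra hne
          obtain ⟨v, hv⟩ := Finset.nonempty_iff_ne_empty.2 hne
          apply hc
          refine ⟨(v, true), hv, ?_⟩
          have : (∅ : Clause) ∈ asgLit ((v, true).1, !(v, true).2) F :=
            empty_mem_asgLit hmem _
          exact ih (by have := card_asgLit_lt (x := ((v, true).1, !(v,true).2)) hv; omega) this _
        apply Finset.ext
        intro C
        simp only [Finset.mem_singleton]
        constructor
        · intro hC
          apply Finset.eq_empty_of_forall_notMem
          intro l hl
          have : l.1 ∈ clsVars F := mem_clsVars.2 ⟨C, hC, l.2, by simpa using hl⟩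
          rw [hvars] at this; simp at this
        · rintro rfl; exact hmem

lemma rkAux_fuel_indep : ∀ (f1 : ℕ) (f2 k : ℕ) (F : ClauseSet),
    (clsVars F).card < f1 → (clsVars F).card < f2 → rkAux f1 k F = rkAux f2 k F := by
  intro f1
  induction f1 with
  | zero => intro f2 k F h1; omega
  | succ f1 ih =>
    intro f2 k F h1 h2
    cases k with
    | zero => rw [rkAux_zero, rkAux_zero]
    | succ k =>
      cases f2 with
      | zero => omega
      | succ f2 =>
        have hp : (fun x : Lit => x.1 ∈ clsVars F ∧
              rkAux f1 k (asgLit (x.1, !x.2) F) = {(∅ : Clause)}) =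
            (fun x : Lit => x.1 ∈ clsVars F ∧
              rkAux f2 k (asgLit (x.1, !x.2) F) = {(∅ : Clause)}) := by
          funext x
          by_cases hx : x.1 ∈ clsVars F
          · have hcard := card_asgLit_lt (x := (x.1, !x.2)) hx
            rw [ih f2 k _ (by omega) (by omega)]
          · simp [hx]
        rw [rkAux_succ, rkAux_succ]
        simp only [hp]
        by_cases hc : ∃ x : Lit, x.1 ∈ clsVars F ∧
            rkAux f2 k (asgLit (x.1, !x.2) F) = {(∅ : Clause)}
        · rw [dif_pos hc, dif_pos hc]
          have hspec := hc.choose_spec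
          have hcard := card_asgLit_lt hspec.1
          exact ih f2 (k + 1) _ (by omega) (by omega)
        · rw [dif_neg hc, dif_neg hc]

lemma rk_eq_rkAux {f k : ℕ} {F : ClauseSet} (hf : (clsVars F).card < f) :
    rkAux f k F = rk k F :=
  rkAux_fuel_indep f ((clsVars F).card + 1) k F hf (by omega)

lemma clsVars_rkAux_subset : ∀ (f k : ℕ) (F : ClauseSet),
    clsVars (rkAux f k F) ⊆ clsVars F := by
  have hr0 : ∀ F : ClauseSet, clsVars (r0 F) ⊆ clsVars F := by
    intro F
    unfold r0
    by_cases h : (∅ : Clause) ∈ F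
    · rw [if_pos h]
      intro v hv
      rw [mem_clsVars] at hv
      obtain ⟨C, hC, b, hb⟩ := hv
      simp only [Finset.mem_singleton] at hC
      subst hC; simp at hb
    · rw [if_neg h]
  intro f
  induction f with
  | zero => intro k F; rw [rkAux_fuel_zero]; exact hr0 F
  | succ f ih =>
    intro k F
    cases k with
    | zero => rw [rkAux_zero]; exact hr0 F
    | succ k =>
      rw [rkAux_succ]
      by_cases hc : ∃ x : Lit, x.1 ∈ clsVars F ∧
          rkAux f k (asgLit (x.1, !x.2) F) = {(∅ : Clause)}
      · rw [dif_pos hc]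
        exact (ih (k + 1) _).trans (clsVars_asgLit_subset _ _)
      · rw [dif_neg hc]

lemma rkAux_to_R : ∀ (f k : ℕ) (F : ClauseSet),
    rkAux f k F = {(∅ : Clause)} → R k F := by
  intro f
  induction f with
  | zero =>
    intro k F h
    rw [rkAux_fuel_zero] at h
    exact R_empty (r0_eq_singleton.1 h) k
  | succ f ih =>
    intro k F h
    cases k with
    | zero => rw [rkAux_zero] at h; exact R_empty (r0_eq_singleton.1 h) 0
    | succ k =>
      rw [rkAux_succ] at h
      by_cases hc : ∃ x : Lit, x.1 ∈ clsVars F ∧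
          rkAux f k (asgLit (x.1, !x.2) F) = {(∅ : Clause)}
      · rw [dif_pos hc] at h
        have hspec := hc.choose_spec
        exact R_succ.2 (Or.inr ⟨hc.choose, hspec.1, ih k _ hspec.2, ih (k + 1) _ h⟩)
      · rw [dif_neg hc] at h
        subst h
        exact R_empty (by simp) _

lemma R_to_rk : ∀ (k : ℕ) (F : ClauseSet), R k F → rk k F = {(∅ : Clause)}
  | 0, F, h => by
      rw [rk, rkAux_zero]
      exact r0_eq_singleton.2 (R_zero.1 h)
  | k + 1, F, h => by
      rcases R_succ.1 h with h0 | ⟨x, hx, h1, h2⟩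
      · exact rkAux_of_empty _ (by omega) h0 _
      · rw [rk, rkAux_succ]
        have hcx := card_asgLit_lt (x := (x.1, !x.2)) hx
        have hc : ∃ y : Lit, y.1 ∈ clsVars F ∧
            rkAux ((clsVars F).card) k (asgLit (y.1, !y.2) F) = {(∅ : Clause)} := by
          refine ⟨x, hx, ?_⟩
          rw [rkAux_fuel_indep _ ((clsVars (asgLit (x.1, !x.2) F)).card + 1) k _
            (by omega) (by omega)]
          exact R_to_rk k _ h1
        rw [dif_pos hc]
        have hspec := hc.choose_spec
        have hcc := card_asgLit_lt hspec.1
        rw [rkAux_fuel_indep _ ((clsVars (asgLit hc.choose F)).card + 1) (k + 1) _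
          (by omega) (by omega)]
        exact R_to_rk (k + 1) _ (R_asgLit (k + 1) F hc.choose h)
  termination_by k F => (clsVars F).card + k
  decreasing_by
  · omega
  · omega

lemma rkAux_cnfSat : ∀ (f : ℕ) (k : ℕ) (F : ClauseSet) (a : Var → Bool),
    (clsVars F).card < f → cnfSat a F → cnfSat a (rkAux f (k + 1) F) := by
  intro f
  induction f with
  | zero => intro k F a h; omega
  | succ f ih =>
    intro k F a hf ha
    rw [rkAux_succ]
    by_cases hc : ∃ x : Lit, x.1 ∈ clsVars F ∧
        rkAux f k (asgLit (x.1, !x.2) F) = {(∅ : Clause)}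
    · rw [dif_pos hc]
      have hspec := hc.choose_spec
      have hunsat : ¬ sat (asgLit (hc.choose.1, !hc.choose.2) F) :=
        R_unsat k _ (rkAux_to_R f k _ hspec.2)
      have hax : a hc.choose.1 = hc.choose.2 := forced_of_unsat_neg hunsat ha
      have hcard := card_asgLit_lt hspec.1
      exact ih k _ a (by omega) (cnfSat_asgLit hax ha)
    · rw [dif_neg hc]; exact ha

lemma rkAux_no_forced : ∀ (f : ℕ) (k : ℕ) (F : ClauseSet) (x : Lit),
    (clsVars F).card < f → sat F →
    x.1 ∈ clsVars (rkAux f (k + 1) F) →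
    forcedLit (rkAux f (k + 1) F) x →
    R k (asgLit (x.1, !x.2) F) → False := by
  intro f
  induction f with
  | zero => intro k F x h; omega
  | succ f ih =>
    intro k F x hf hsat hmem hforced hR
    rw [rkAux_succ] at hmem hforced
    by_cases hc : ∃ y : Lit, y.1 ∈ clsVars F ∧
        rkAux f k (asgLit (y.1, !y.2) F) = {(∅ : Clause)}
    · rw [dif_pos hc] at hmem hforced
      set c := hc.choose with hc_def
      have hspec := hc.choose_spec
      have hcard : (clsVars (asgLit c F)).card < (clsVars F).card :=
        card_asgLit_lt hspec.1
      have hunsat : ¬ sat (asgLit (c.1, !c.2) F) :=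
        R_unsat k _ (rkAux_to_R f k _ hspec.2)
      -- sat (asgLit c F)
      obtain ⟨a, ha⟩ := hsat
      have hax : a c.1 = c.2 := forced_of_unsat_neg hunsat ha
      have hsat' : sat (asgLit c F) := ⟨a, cnfSat_asgLit hax ha⟩
      -- x.1 ≠ c.1
      have hxc : x.1 ≠ c.1 := by
        intro he
        apply var_not_mem_asgLit c F
        rw [← he]
        exact clsVars_rkAux_subset f (k + 1) (asgLit c F) hmem
      -- R k (asgLit x̄ (asgLit c F))
      have hR' : R k (asgLit (x.1, !x.2) (asgLit c F)) := by
        rw [asgLit_comm (x := (x.1, !x.2)) (y := c) (by simpa using hxc)]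
        exact R_asgLit k _ c hR
      exact ih k (asgLit c F) x (by omega) hsat' hmem hforced hR'
    · rw [dif_neg hc] at hmem hforced
      apply hc
      refine ⟨x, hmem, ?_⟩
      have hcx := card_asgLit_lt (x := (x.1, !x.2)) hmem
      rw [rkAux_fuel_indep _ ((clsVars (asgLit (x.1, !x.2) F)).card + 1) k _
        (by omega) (by omega)]
      exact R_to_rk k _ hR

lemma mem_applyPA {φ : Var → Option Bool} {F : ClauseSet} {D : Clause} :
    D ∈ applyPA φ F ↔ ∃ C ∈ F, (¬ ∃ l ∈ C, φ l.1 = some l.2) ∧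
      D = C.filter (fun l => φ l.1 ≠ some (!l.2)) := by
  simp only [applyPA, Finset.mem_image, Finset.mem_filter]
  constructor
  · rintro ⟨C, ⟨h1, h2⟩, rfl⟩; exact ⟨C, h1, h2, rfl⟩
  · rintro ⟨C, h1, h2, rfl⟩; exact ⟨C, ⟨h1, h2⟩, rfl⟩

lemma assigned_not_mem_clsVars {φ : Var → Option Bool} {F : ClauseSet} {v : Var}
    {b : Bool} (h : φ v = some b) : v ∉ clsVars (applyPA φ F) := by
  rw [mem_clsVars]
  rintro ⟨D, hD, c, hc⟩
  rw [mem_applyPA] at hD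
  obtain ⟨C, hC, hns, rfl⟩ := hD
  rw [Finset.mem_filter] at hc
  obtain ⟨hcC, hne⟩ := hc
  simp only at hne
  rw [h] at hne
  have : b = c := by
    cases b <;> cases c <;> simp_all
  exact hns ⟨(v, c), hcC, by simp only; rw [h, this]⟩

lemma lit_eq_or {l y : Lit} (h : l.1 = y.1) : l = y ∨ l = (y.1, !y.2) := by
  rcases l with ⟨u, b⟩; rcases y with ⟨w, c⟩
  obtain rfl : u = w := h
  cases b <;> cases c <;> simp

lemma applyPA_extend {φ : Var → Option Bool} {y : Lit} (hy : φ y.1 = none)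
    (F : ClauseSet) :
    applyPA (fun v => if v = y.1 then some y.2 else φ v) F =
      asgLit y (applyPA φ F) := by
  set φ' := fun v => if v = y.1 then some y.2 else φ v with hφ'
  apply Finset.ext
  intro D
  rw [mem_applyPA, mem_asgLit]
  constructor
  · rintro ⟨C, hC, hns, rfl⟩
    have hyC : y ∉ C := fun hm => hns ⟨y, hm, by simp [hφ']⟩
    have hnsφ : ¬ ∃ l ∈ C, φ l.1 = some l.2 := by
      rintro ⟨l, hl, hsat⟩
      apply hns
      refine ⟨l, hl, ?_⟩
      have hlv : l.1 ≠ y.1 := fun he => by rw [he, hy] at hsat; exact absurd hsat (by simp)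
      simp [hφ', hlv, hsat]
    refine ⟨C.filter (fun l => φ l.1 ≠ some (!l.2)), mem_applyPA.2 ⟨C, hC, hnsφ, rfl⟩,
      ?_, ?_⟩
    · rw [Finset.mem_filter]; rintro ⟨hm, -⟩; exact hyC hm
    · apply Finset.ext
      intro l
      rw [Finset.mem_erase, Finset.mem_filter, Finset.mem_filter]
      constructor
      · rintro ⟨hm, hp⟩
        by_cases hlv : l.1 = y.1
        · rcases lit_eq_or hlv with rfl | rfl
          · exact absurd hm hyC
          · exfalso; apply hp; simp [hφ']
        · refine ⟨fun he => hlv (by rw [he]), hm, ?_⟩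
          rw [hφ'] at hp; simpa [hlv] using hp
      · rintro ⟨hne, hm, hp⟩
        by_cases hlv : l.1 = y.1
        · rcases lit_eq_or hlv with rfl | rfl
          · exact absurd hm hyC
          · exact absurd rfl hne
        · refine ⟨hm, ?_⟩
          rw [hφ']; simpa [hlv] using hp
  · rintro ⟨D', hD', hyD', rfl⟩
    rw [mem_applyPA] at hD'
    obtain ⟨C, hC, hnsφ, rfl⟩ := hD'
    have hyC : y ∉ C := fun hm =>
      hyD' (Finset.mem_filter.2 ⟨hm, show φ y.1 ≠ some (!y.2) by rw [hy]; simp⟩)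
    refine ⟨C, hC, ?_, ?_⟩
    · rintro ⟨l, hl, hsat⟩
      by_cases hlv : l.1 = y.1
      · have h2 : l.2 = y.2 := by
          rw [hφ'] at hsat
          simp only [hlv, if_pos] at hsat
          exact (Option.some.inj hsat).symm
        exact hyC ((Prod.ext hlv h2) ▸ hl)
      · refine hnsφ ⟨l, hl, ?_⟩
        rw [hφ'] at hsat; simpa [hlv] using hsat
    · apply Finset.ext
      intro l
      rw [Finset.mem_erase, Finset.mem_filter, Finset.mem_filter]
      constructor
      · rintro ⟨hne, hm, hp⟩
        refine ⟨hm, ?_⟩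
        by_cases hlv : l.1 = y.1
        · exfalso
          rcases lit_eq_or hlv with rfl | rfl
          · exact hyC hm
          · exact hne rfl
        · rw [hφ']; simpa [hlv] using hp
      · rintro ⟨hm, hp⟩
        by_cases hlv : l.1 = y.1
        · exfalso
          rcases lit_eq_or hlv with rfl | rfl
          · exact hyC hm
          · apply hp; simp [hφ']
        · refine ⟨fun he => hlv (by rw [he]), hm, ?_⟩
          rw [hφ'] at hp; simpa [hlv] using hp

lemma cnfSat_congr {a a' : Var → Bool} {F : ClauseSet}
    (h : ∀ v ∈ clsVars F, a v = a' v) (ha : cnfSat a F) : cnfSat a' F := by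
  intro C hC
  obtain ⟨l, hl, hal⟩ := ha C hC
  refine ⟨l, hl, ?_⟩
  rw [← h l.1 (mem_clsVars.2 ⟨C, hC, l.2, by simpa using hl⟩)]
  exact hal

lemma rk_to_R {k : ℕ} {F : ClauseSet} (h : rk k F = {(∅ : Clause)}) : R k F :=
  rkAux_to_R _ _ _ h

lemma hdLe_phdLe {k : ℕ} {V : Set Var} {F : ClauseSet} (h : hdLe k V F) :
    phdLe (k + 1) V F := by
  intro φ hφ
  constructor
  · intro hunsat
    exact R_to_rk _ _ (R_mono _ _ (rk_to_R (h φ hφ hunsat)))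
  · intro hsat x hxV hforced
    obtain ⟨a, ha⟩ := hsat
    set G := applyPA φ F with hGdef
    have hcard : (clsVars G).card < (clsVars G).card + 1 := lt_add_one _
    have haG : cnfSat a (rk (k + 1) G) := rkAux_cnfSat _ k G a hcard ha
    have hmem : x.1 ∈ clsVars (rk (k + 1) G) := by
      by_contra hnm
      have h1 : a x.1 = x.2 := hforced a haG
      have ha' : cnfSat (fun v => if v = x.1 then !x.2 else a v) (rk (k + 1) G) := by
        refine cnfSat_congr (fun v hv => ?_) haG
        have : v ≠ x.1 := fun he => hnm (he ▸ hv)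
        simp [this]
      have h2 := hforced _ ha'
      simp at h2
    have hxnone : φ x.1 = none := by
      cases he : φ x.1 with
      | none => rfl
      | some b =>
        exact absurd ((clsVars_rkAux_subset _ _ _) hmem) (assigned_not_mem_clsVars he)
    have hforcedG : forcedLit G x := fun a0 ha0 =>
      hforced a0 (rkAux_cnfSat _ k G a0 hcard ha0)
    have hunsat' : ¬ sat (asgLit (x.1, !x.2) G) := unsat_asgLit_neg_of_forced hforcedG
    have hPA2 : PAover V (fun v => if v = x.1 then some (!x.2) else φ v) := by
      obtain ⟨hfin, hsub⟩ := hφ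
      constructor
      · apply (hfin.insert x.1).subset
        intro v hv
        simp only [Set.mem_setOf_eq] at hv
        by_cases hvx : v = x.1
        · exact Or.inl hvx
        · right; simp only [Set.mem_setOf_eq]; simpa [hvx] using hv
      · intro v hv
        by_cases hvx : v = x.1
        · exact hvx ▸ hxV
        · exact hsub v (by simpa [hvx] using hv)
    have happ : applyPA (fun v => if v = x.1 then some (!x.2) else φ v) F =
        asgLit (x.1, !x.2) G :=
      applyPA_extend (y := (x.1, !x.2)) hxnone F
    have hr : rk k (asgLit (x.1, !x.2) G) = {(∅ : Clause)} := by
      rw [← happ]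
      exact h _ hPA2 (by rw [happ]; exact hunsat')
    exact rkAux_no_forced ((clsVars G).card + 1) k G x hcard ⟨a, ha⟩ hmem hforced
      (rk_to_R hr)


/-- for every clause-set `F` and set of variables `V`,
`hd^V(F) ≤ phd^V(F) ≤ hd^V(F) + 1`. -/
theorem stmt12 (F : ClauseSet) (hF : ∀ C ∈ F, isClause C) (V : Set Var) :
    hdV V F ≤ phdV V F ∧ phdV V F ≤ hdV V F + 1 := by
  have hAB : {k | phdLe k V F} ⊆ {k | hdLe k V F} :=
    fun k hk φ hφ hun => (hk φ hφ).1 hun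
  constructor
  · by_cases hne : {k | phdLe k V F}.Nonempty
    · exact Nat.sInf_le (hAB (Nat.sInf_mem hne))
    · by_cases hne2 : {k | hdLe k V F}.Nonempty
      · exact absurd ⟨_, hdLe_phdLe (Nat.sInf_mem hne2)⟩ hne
      · rw [Set.not_nonempty_iff_eq_empty] at hne hne2
        rw [hdV, phdV, hne, hne2]
  · by_cases hne2 : {k | hdLe k V F}.Nonempty
    · exact Nat.sInf_le (hdLe_phdLe (Nat.sInf_mem hne2))
    · rw [Set.not_nonempty_iff_eq_empty] at hne2
      have he : {k | phdLe k V F} = ∅ :=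
        Set.eq_empty_of_subset_empty (hne2 ▸ hAB)
      rw [phdV, he, Nat.sInf_empty]
      omega
end
end

section
/- For the clause-set A_k consisting of all 2^k full clauses over k fixed variables (which is unsatisfiable), both the hardness and the propagation-hardness equal k. -/
open scoped Classical

noncomputable section

/-- Absolute hardness: `hd(F) = hd^{var(F)}(F)`. -/
def hd (F : ClauseSet) : ℕ := hdV (↑(clsVars F)) F

/-- Absolute propagation-hardness: `phd(F) = phd^{var(F)}(F)`. -/
def phd (F : ClauseSet) : ℕ := phdV (↑(clsVars F)) F

/-- The full clause over the variables `0, …, k-1` given by a sign pattern `s`. -/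
def fullClause (k : ℕ) (s : Fin k → Bool) : Clause :=
  Finset.univ.image (fun i : Fin k => ((i : ℕ), s i))

/-- `A_k`: the clause-set of all `2^k` full clauses over `k` variables. -/
def Ak (k : ℕ) : ClauseSet := Finset.univ.image (fullClause k)

/-! After a partial assignment `φ`, the full clauses over `S` become exactly the full clauses
over the variables of `S` left unassigned by `φ`; in particular assigning one literal leaves the
full clause-set over one variable fewer. Hence, by induction, on the full clause-set over `n`
variables `r_j` derives `⊥` when `j ≥ n` (every literal is failed), while for `j < n` no literal
is failed and `r_j` returns the clause-set unchanged. These clause-sets are unsatisfiable under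
every partial assignment, so the second half of the definition of `phd` is vacuous and
`hd = phd = n`. -/

lemma applyPA_none (F : ClauseSet) : applyPA (fun _ => none) F = F := by
  simp [applyPA]

lemma PAover_none (V : Set Var) : PAover V fun _ => none :=
  ⟨by simp, fun _ h => absurd rfl h⟩

lemma hdLe_of_phdLe {k : ℕ} {V : Set Var} {F : ClauseSet} (h : phdLe k V F) : hdLe k V F :=
  fun φ hφ => (h φ hφ).1

lemma asgLit_eq_applyPA (x : Lit) (F : ClauseSet) :
    asgLit x F = applyPA (fun v => if v = x.1 then some x.2 else none) F := by
  obtain ⟨v, b⟩ := x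
  have satisfied_iff (C : Clause) :
      (v, b) ∈ C ↔ ∃ l ∈ C, (if l.1 = v then some b else none) = some l.2 := by
    refine ⟨fun h => ⟨(v, b), h, by simp⟩, ?_⟩
    rintro ⟨⟨w, c⟩, hC, h⟩
    split_ifs at h with hw
    simp_all
  have falsified_iff (l : Lit) :
      l ≠ (v, !b) ↔ (if l.1 = v then some b else none) ≠ some (!l.2) := by
    obtain ⟨w, c⟩ := l
    by_cases hw : w = v <;> cases b <;> simp [hw]
  unfold asgLit applyPA
  simp only [satisfied_iff]
  exact Finset.image_congr fun C _ => by simp only [← Finset.filter_ne', falsified_iff]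

lemma r0_of_empty_notMem {F : ClauseSet} (h : ∅ ∉ F) : r0 F = F := if_neg h

lemma rkAux_bot (fuel j : ℕ) : rkAux fuel j {∅} = {∅} := by
  match fuel, j with
  | _, 0 | 0, _ + 1 => simp [rkAux, r0]
  | _ + 1, _ + 1 =>
    rw [rkAux, dif_neg]
    rintro ⟨x, hx, -⟩
    simp [clsVars] at hx

def fullClauseOver (S : Finset Var) (f : Var → Bool) : Clause :=
  S.image fun v => (v, f v)

def fullClausesOver (S : Finset Var) : ClauseSet :=
  S.powerset.image fun T => fullClauseOver S fun v => decide (v ∈ T)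

section FullClauses

variable {S : Finset Var} {f g : Var → Bool}

lemma fullClauseOver_congr (h : Set.EqOn f g S) : fullClauseOver S f = fullClauseOver S g :=
  Finset.image_congr fun v hv => by simp only [h hv]

lemma filter_fullClauseOver (p : Lit → Prop) [DecidablePred p] :
    (fullClauseOver S f).filter p = fullClauseOver (S.filter fun v => p (v, f v)) f :=
  Finset.filter_image

lemma exists_mem_fullClauseOver {P : Lit → Prop} :
    (∃ l ∈ fullClauseOver S f, P l) ↔ ∃ v ∈ S, P (v, f v) := by
  simp [fullClauseOver]

lemma forall_mem_fullClauseOver {P : Lit → Prop} :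
    (∀ l ∈ fullClauseOver S f, P l) ↔ ∀ v ∈ S, P (v, f v) := by
  simp [fullClauseOver]

lemma image_fst_fullClauseOver : (fullClauseOver S f).image Prod.fst = S := by
  simp [fullClauseOver, Finset.image_image, Function.comp_def]

lemma fullClauseOver_eq_empty : fullClauseOver S f = ∅ ↔ S = ∅ :=
  Finset.image_eq_empty

lemma mem_fullClausesOver {C : Clause} :
    C ∈ fullClausesOver S ↔ ∃ f, C = fullClauseOver S f := by
  simp only [fullClausesOver, Finset.mem_image, Finset.mem_powerset]
  constructor
  · rintro ⟨T, -, rfl⟩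
    exact ⟨_, rfl⟩
  · rintro ⟨f, rfl⟩
    exact ⟨S.filter fun v => f v, Finset.filter_subset _ _,
      fullClauseOver_congr fun v hv => by simp [Finset.mem_coe.1 hv]⟩

lemma fullClauseOver_mem_fullClausesOver : fullClauseOver S f ∈ fullClausesOver S :=
  mem_fullClausesOver.2 ⟨f, rfl⟩

@[simp]
lemma fullClausesOver_empty : fullClausesOver ∅ = {∅} := by
  simp [fullClausesOver, fullClauseOver]

lemma empty_notMem_fullClausesOver (hS : S.Nonempty) : ∅ ∉ fullClausesOver S := by
  rw [mem_fullClausesOver]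
  rintro ⟨f, hf⟩
  exact hS.ne_empty (fullClauseOver_eq_empty.1 hf.symm)

lemma fullClausesOver_ne_bot (hS : S.Nonempty) : fullClausesOver S ≠ {∅} := fun h =>
  empty_notMem_fullClausesOver hS (h ▸ Finset.mem_singleton_self _)

lemma clsVars_fullClausesOver : clsVars (fullClausesOver S) = S := by
  apply le_antisymm
  · refine Finset.sup_le fun C hC => ?_
    obtain ⟨f, rfl⟩ := mem_fullClausesOver.1 hC
    exact image_fst_fullClauseOver.le
  · calc S = (fullClauseOver S fun _ => false).image Prod.fst := image_fst_fullClauseOver.symm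
      _ ≤ clsVars (fullClausesOver S) := Finset.le_sup fullClauseOver_mem_fullClausesOver

lemma not_sat_fullClausesOver (S : Finset Var) : ¬ sat (fullClausesOver S) := by
  rintro ⟨a, ha⟩
  obtain ⟨v, -, hv⟩ :=
    exists_mem_fullClauseOver.1 (ha _ (fullClauseOver_mem_fullClausesOver (f := fun v => !a v)))
  simp at hv

end FullClauses

lemma applyPA_fullClausesOver (φ : Var → Option Bool) (S : Finset Var) :
    applyPA φ (fullClausesOver S) = fullClausesOver (S.filter fun v => φ v = none) := by
  -- on a literal not made true by `φ`, "not made false" means "unassigned"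
  have unassigned_iff {o : Option Bool} {b : Bool} (h : o ≠ some b) :
      o ≠ some (!b) ↔ o = none := by
    cases o <;> cases b <;> simp_all
  ext D
  simp only [applyPA, Finset.mem_image, Finset.mem_filter, mem_fullClausesOver, not_exists,
    not_and]
  constructor
  · rintro ⟨C, ⟨⟨f, rfl⟩, hf⟩, rfl⟩
    rw [forall_mem_fullClauseOver] at hf
    refine ⟨f, ?_⟩
    rw [filter_fullClauseOver]
    exact congrArg (fullClauseOver · f) (Finset.filter_congr fun v hv => unassigned_iff (hf v hv))
  · rintro ⟨f, rfl⟩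
    -- falsify every assigned variable and keep the signs of `f` elsewhere
    set g : Var → Bool := fun v => ((φ v).map (!·)).getD (f v)
    have hg : ∀ v, φ v ≠ some (g v) := fun v => by cases h : φ v <;> simp [g, h]
    refine ⟨fullClauseOver S g, ⟨⟨g, rfl⟩, forall_mem_fullClauseOver.2 fun v _ => hg v⟩,
      ?_⟩
    rw [filter_fullClauseOver, Finset.filter_congr fun v _ => unassigned_iff (hg v)]
    exact fullClauseOver_congr fun v hv => by simp [g, (Finset.mem_filter.1 hv).2]

lemma asgLit_fullClausesOver (x : Lit) (S : Finset Var) :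
    asgLit x (fullClausesOver S) = fullClausesOver (S.erase x.1) := by
  rw [asgLit_eq_applyPA, applyPA_fullClausesOver, ← Finset.filter_ne']
  simp

lemma rkAux_fullClausesOver_of_card_le (fuel : ℕ) :
    ∀ j S, S.card ≤ fuel → S.card ≤ j → rkAux fuel j (fullClausesOver S) = {∅} := by
  induction fuel with
  | zero =>
    intro j S hfuel _
    rw [Finset.card_eq_zero.1 (Nat.le_zero.1 hfuel), fullClausesOver_empty, rkAux_bot]
  | succ fuel ih =>
    intro j S hfuel hj
    obtain rfl | ⟨v, hv⟩ := S.eq_empty_or_nonempty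
    · rw [fullClausesOver_empty, rkAux_bot]
    obtain ⟨j, rfl⟩ : ∃ i, j = i + 1 :=
      Nat.exists_eq_add_one.2 (Finset.card_pos.2 ⟨v, hv⟩ |>.trans_le hj)
    have hcard {w} (hw : w ∈ S) : (S.erase w).card + 1 = S.card := Finset.card_erase_add_one hw
    have hfailed : ∃ x : Lit, x.1 ∈ clsVars (fullClausesOver S) ∧
        rkAux fuel j (asgLit (x.1, !x.2) (fullClausesOver S)) = {∅} := by
      refine ⟨(v, true), clsVars_fullClausesOver ▸ hv, ?_⟩
      rw [asgLit_fullClausesOver]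
      exact ih j _ (by grind) (by grind)
    rw [rkAux, dif_pos hfailed, asgLit_fullClausesOver]
    have hx : hfailed.choose.1 ∈ S := by
      simpa only [clsVars_fullClausesOver] using hfailed.choose_spec.1
    exact ih (j + 1) _ (by grind) (by grind)

lemma rkAux_fullClausesOver_of_lt_card (fuel : ℕ) :
    ∀ j S, j < S.card → rkAux fuel j (fullClausesOver S) = fullClausesOver S := by
  induction fuel with
  | zero =>
    intro j S hj
    have hS : S.Nonempty := Finset.card_pos.1 (by omega)
    cases j <;> exact r0_of_empty_notMem (empty_notMem_fullClausesOver hS)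
  | succ fuel ih =>
    intro j S hj
    cases j with
    | zero => exact r0_of_empty_notMem (empty_notMem_fullClausesOver (Finset.card_pos.1 hj))
    | succ j =>
      rw [rkAux, dif_neg]
      rintro ⟨x, hx, hfailed⟩
      rw [clsVars_fullClausesOver] at hx
      have hcard : (S.erase x.1).card + 1 = S.card := Finset.card_erase_add_one hx
      simp only [asgLit_fullClausesOver] at hfailed
      rw [ih j _ (by omega)] at hfailed
      exact fullClausesOver_ne_bot (Finset.card_pos.1 (by omega)) hfailed

lemma rk_fullClausesOver_of_card_le {j : ℕ} {S : Finset Var} (h : S.card ≤ j) :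
    rk j (fullClausesOver S) = {∅} := by
  rw [rk, clsVars_fullClausesOver]
  exact rkAux_fullClausesOver_of_card_le _ j S (by omega) h

lemma rk_fullClausesOver_of_lt_card {j : ℕ} {S : Finset Var} (h : j < S.card) :
    rk j (fullClausesOver S) = fullClausesOver S := by
  rw [rk, clsVars_fullClausesOver]
  exact rkAux_fullClausesOver_of_lt_card _ j S h

lemma hdLe_fullClausesOver (V : Set Var) (S : Finset Var) :
    hdLe S.card V (fullClausesOver S) := by
  intro φ _ _
  rw [applyPA_fullClausesOver]
  exact rk_fullClausesOver_of_card_le (Finset.card_filter_le _ _)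

lemma phdLe_fullClausesOver (V : Set Var) (S : Finset Var) :
    phdLe S.card V (fullClausesOver S) := by
  intro φ hφ
  refine ⟨hdLe_fullClausesOver V S φ hφ, fun hsat => absurd hsat ?_⟩
  rw [applyPA_fullClausesOver]
  exact not_sat_fullClausesOver _

lemma not_hdLe_fullClausesOver {m : ℕ} {S : Finset Var} (h : m < S.card) (V : Set Var) :
    ¬ hdLe m V (fullClausesOver S) := by
  intro hle
  have hbot := hle _ (PAover_none V) (by rw [applyPA_none]; exact not_sat_fullClausesOver S)
  rw [applyPA_none, rk_fullClausesOver_of_lt_card h] at hbot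
  exact fullClausesOver_ne_bot (Finset.card_pos.1 (by omega)) hbot

lemma hdV_fullClausesOver (V : Set Var) (S : Finset Var) : hdV V (fullClausesOver S) = S.card :=
  IsLeast.csInf_eq ⟨hdLe_fullClausesOver V S, fun _ hle =>
    not_lt.1 fun hlt => not_hdLe_fullClausesOver hlt V hle⟩

lemma phdV_fullClausesOver (V : Set Var) (S : Finset Var) :
    phdV V (fullClausesOver S) = S.card :=
  IsLeast.csInf_eq ⟨phdLe_fullClausesOver V S, fun _ hle =>
    not_lt.1 fun hlt => not_hdLe_fullClausesOver hlt V (hdLe_of_phdLe hle)⟩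

lemma fullClause_eq_fullClauseOver {k : ℕ} {s : Fin k → Bool} {f : Var → Bool}
    (hf : ∀ i : Fin k, f i = s i) : fullClause k s = fullClauseOver (Finset.range k) f := by
  ext ⟨v, b⟩
  simp only [fullClause, fullClauseOver, Finset.mem_image, Finset.mem_univ, true_and,
    Finset.mem_range, Prod.mk.injEq]
  constructor
  · rintro ⟨i, rfl, rfl⟩
    exact ⟨i, i.2, rfl, hf i⟩
  · rintro ⟨v, hv, rfl, rfl⟩
    exact ⟨⟨v, hv⟩, rfl, (hf ⟨v, hv⟩).symm⟩

lemma Ak_eq_fullClausesOver (k : ℕ) : Ak k = fullClausesOver (Finset.range k) := by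
  ext C
  simp only [Ak, Finset.mem_image, Finset.mem_univ, true_and, mem_fullClausesOver]
  constructor
  · rintro ⟨s, rfl⟩
    exact ⟨fun v => if h : v < k then s ⟨v, h⟩ else false,
      fullClause_eq_fullClauseOver fun i => dif_pos i.2⟩
  · rintro ⟨f, rfl⟩
    exact ⟨_, fullClause_eq_fullClauseOver (s := fun i => f i) fun _ => rfl⟩

/-- the clause-set `A_k` of all `2^k` full clauses over `k` variables
is unsatisfiable, and both its hardness and its propagation-hardness equal `k`. -/
theorem stmt14 (k : ℕ) : ¬ sat (Ak k) ∧ hd (Ak k) = k ∧ phd (Ak k) = k := by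
  rw [hd, phd, Ak_eq_fullClausesOver, hdV_fullClausesOver, phdV_fullClausesOver,
    Finset.card_range]
  exact ⟨not_sat_fullClausesOver _, rfl, rfl⟩
end
end
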